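/- (Upper bound on the filter-function discrepancy.) There exists a constant c > 0 such that for every real κ̃ ≥ 1, every λ ∈ [1/κ̃, 1], and every λ̃ ∈ [0, 1], one has (f(λ̃) − f(λ))² + (g(λ̃) − g(λ))² ≤ c · κ̃² · (λ̃ − λ)² · (f(λ)² + g(λ)²). -/
import Mathlib
set_option maxHeartbeats 1000000

lemma cosLip (x y : ℝ) : |Real.cos x - Real.cos y| ≤ |x - y| := by
  rw [Real.cos_sub_cos]
  have h1 : |Real.sin ((x+y)/2)| ≤ 1 := Real.abs_sin_le_one _
  have h2 : |Real.sin ((x-y)/2)| ≤ |(x-y)/2| := Real.abs_sin_le_abs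
  calc |(-2) * Real.sin ((x+y)/2) * Real.sin ((x-y)/2)|
      = 2 * (|Real.sin ((x+y)/2)| * |Real.sin ((x-y)/2)|) := by
        rw [abs_mul, abs_mul]; norm_num; ring
    _ ≤ 2 * (1 * |(x-y)/2|) := by gcongr
    _ = |x - y| := by rw [abs_div]; push_cast [abs_two]; ring

lemma sinLip (x y : ℝ) : |Real.sin x - Real.sin y| ≤ |x - y| := by
  rw [Real.sin_sub_sin]
  have h1 : |Real.cos ((x+y)/2)| ≤ 1 := Real.abs_cos_le_one _
  have h2 : |Real.sin ((x-y)/2)| ≤ |(x-y)/2| := Real.abs_sin_le_abs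
  calc |2 * Real.sin ((x-y)/2) * Real.cos ((x+y)/2)|
      = 2 * (|Real.sin ((x-y)/2)| * |Real.cos ((x+y)/2)|) := by
        rw [abs_mul, abs_mul]; norm_num; ring
    _ ≤ 2 * (|(x-y)/2| * 1) := by gcongr
    _ = |x - y| := by rw [abs_div]; push_cast [abs_two]; ring

/-- The filter function `f`: `f(λ) = 1/(2κ̃λ)` for `λ ≥ 1/κ̃`,
`f(λ) = -(1/2)cos(πκ̃λ)` for `1/(2κ̃) ≤ λ ≤ 1/κ̃`, and `f(λ) = 0` for `λ ≤ 1/(2κ̃)`. -/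
noncomputable def ff (κ lam : ℝ) : ℝ :=
  if 1 / κ ≤ lam then 1 / (2 * κ * lam)
  else if 1 / (2 * κ) ≤ lam then -(1 / 2) * Real.cos (Real.pi * κ * lam)
  else 0

/-- The filter function `g`: `g(λ) = 0` for `λ ≥ 1/κ̃`,
`g(λ) = (1/2)sin(πκ̃λ)` for `1/(2κ̃) ≤ λ ≤ 1/κ̃`, and `g(λ) = 1/2` for `λ ≤ 1/(2κ̃)`. -/
noncomputable def gg (κ lam : ℝ) : ℝ :=
  if 1 / κ ≤ lam then 0
  else if 1 / (2 * κ) ≤ lam then (1 / 2) * Real.sin (Real.pi * κ * lam)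
  else 1 / 2

lemma keyf (κ lam lam' : ℝ) (hκ : 1 ≤ κ) (h1 : 1/κ ≤ lam) (h2 : lam ≤ 1)
    (h3 : 0 ≤ lam') :
    (lam * (ff κ lam' - ff κ lam))^2 ≤ 25 * (lam' - lam)^2 := by
  have hκ0 : (0:ℝ) < κ := lt_of_lt_of_le one_pos hκ
  have hlam0 : 0 < lam := lt_of_lt_of_le (by positivity) h1
  have hkl : 1 ≤ κ * lam := by
    rw [div_le_iff₀ hκ0] at h1; linarith
  rw [ff, ff, if_pos h1]
  split_ifs with hc1 hc2
  · -- lam' ≥ 1/κ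
    have hlam'0 : 0 < lam' := lt_of_lt_of_le (by positivity) hc1
    have hkl' : 1 ≤ κ * lam' := by rw [div_le_iff₀ hκ0] at hc1; linarith
    have heq : lam * (1/(2*κ*lam') - 1/(2*κ*lam)) = (lam - lam')/(2*(κ*lam')) := by
      field_simp
    rw [heq, div_pow, div_le_iff₀ (by positivity)]
    have h4 : (4:ℝ) ≤ (2*(κ*lam'))^2 := by nlinarith [hkl']
    nlinarith [sq_nonneg (lam' - lam), h4]
  · -- middle region
    push_neg at hc1
    have hd : 0 < lam - lam' := by linarith [lt_of_lt_of_le hc1 h1]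
    have hb : 0 ≤ 1/κ - lam' := le_of_lt (by linarith)
    have hklle : κ * lam' ≤ 1 := by
      have := (lt_div_iff₀ hκ0).mp hc1; nlinarith
    set c := Real.cos (Real.pi * κ * lam') with hcdef
    have hC1 : -1 ≤ c := Real.neg_one_le_cos _
    have hC2 : c ≤ 1 := Real.cos_le_one _
    rcases le_or_gt 2 (κ * lam) with hk2 | hk2
    · -- crude: lam ≤ 2(lam - lam')
      have hfle : 1/(2*κ*lam) ≤ 1/2 := by
        rw [div_le_div_iff₀ (by positivity) (by norm_num)]; nlinarith
      have hfge : (0:ℝ) < 1/(2*κ*lam) := by positivity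
      have hlam2d : lam ≤ 2*(lam - lam') := by
        have : 1/κ ≤ lam/2 := by rw [div_le_div_iff₀ hκ0 (by norm_num)]; nlinarith
        linarith
      have he1 : -1 ≤ -(1/2)*c - 1/(2*κ*lam) := by linarith
      have he2 : -(1/2)*c - 1/(2*κ*lam) ≤ 1 := by linarith
      nlinarith [sq_nonneg lam, mul_nonneg (sub_nonneg.2 he2)
          (by linarith : (0:ℝ) ≤ 1 + (-(1/2)*c - 1/(2*κ*lam))),
        sq_nonneg (lam - lam'), hlam0.le, hd.le, hlam2d]
    · -- fine: use Lipschitz bound on cos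
      have hcb : |c - Real.cos Real.pi| ≤ |Real.pi * κ * lam' - Real.pi| := cosLip _ _
      have habs : |Real.pi * κ * lam' - Real.pi| = Real.pi * (1 - κ*lam') := by
        rw [abs_of_nonpos (by nlinarith [Real.pi_pos])]; ring
      rw [Real.cos_pi, habs] at hcb
      obtain ⟨hc1', hc2'⟩ := abs_le.mp hcb
      have hre : lam * (-(1/2)*c - 1/(2*κ*lam)) = -(lam*(c+1))/2 + (lam - 1/κ)/2 := by
        field_simp; ring
      rw [hre]
      have hm1 : lam*(c+1) ≤ lam*(Real.pi * (1 - κ*lam')) :=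
        mul_le_mul_of_nonneg_left (by linarith) hlam0.le
      have hm2 : -(lam*(Real.pi * (1 - κ*lam'))) ≤ lam*(c+1) := by
        nlinarith [mul_le_mul_of_nonneg_left hc1' hlam0.le]
      have hm3 : lam*(Real.pi * (1 - κ*lam')) ≤ 8*(1/κ - lam') := by
        have h8 : Real.pi * (κ*lam) * (1/κ - lam') ≤ 8*(1/κ - lam') := by
          have h9 : Real.pi * (κ*lam) ≤ 8 := by
            nlinarith [Real.pi_le_four, Real.pi_pos, hk2, hkl]
          nlinarith [mul_nonneg (by linarith : (0:ℝ) ≤ 8 - Real.pi*(κ*lam)) hb]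
        have : lam*(Real.pi * (1 - κ*lam')) = Real.pi * (κ*lam) * (1/κ - lam') := by
          field_simp
        rw [this]; exact h8
      have hsd : 1/κ - lam' ≤ lam - lam' := by linarith
      have hld : lam - 1/κ ≤ lam - lam' := by linarith
      have hE1 : -(lam*(c+1))/2 + (lam - 1/κ)/2 ≤ 5*(lam - lam') := by
        nlinarith [hm2, hm3, hb, hd.le]
      have hE2 : -(5*(lam - lam')) ≤ -(lam*(c+1))/2 + (lam - 1/κ)/2 := by
        nlinarith [hm1, hm3, hb, hd.le, h1, hlam0.le]
      nlinarith [hE1, hE2, hd.le]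
  · -- lowest region
    push_neg at hc1 hc2
    have hre : lam * (0 - 1/(2*κ*lam)) = -(1/(2*κ)) := by field_simp; ring
    rw [hre]
    have hd2 : 1/(2*κ) ≤ lam - lam' := by
      have ha : 1/(2*κ) < 1/κ - lam' := by
        have : (1:ℝ)/κ - 1/(2*κ) = 1/(2*κ) := by field_simp; ring
        linarith [hc2, this]
      linarith
    have hp : (0:ℝ) < 1/(2*κ) := by positivity
    nlinarith [hd2, hp]

lemma keyg (κ lam lam' : ℝ) (hκ : 1 ≤ κ) (h1 : 1/κ ≤ lam) (h2 : lam ≤ 1)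
    (h3 : 0 ≤ lam') :
    (lam * (gg κ lam' - gg κ lam))^2 ≤ 25 * (lam' - lam)^2 := by
  have hκ0 : (0:ℝ) < κ := lt_of_lt_of_le one_pos hκ
  have hlam0 : 0 < lam := lt_of_lt_of_le (by positivity) h1
  have hkl : 1 ≤ κ * lam := by rw [div_le_iff₀ hκ0] at h1; linarith
  rw [gg, gg, if_pos h1]
  split_ifs with hc1 hc2
  · nlinarith [sq_nonneg (lam' - lam), sq_nonneg (lam*((0:ℝ)-0))]
  · push_neg at hc1
    have hd : 0 < lam - lam' := by linarith [lt_of_lt_of_le hc1 h1]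
    have hb : 0 ≤ 1/κ - lam' := le_of_lt (by linarith)
    have hklle : κ * lam' ≤ 1 := by
      have := (lt_div_iff₀ hκ0).mp hc1; nlinarith
    set s := Real.sin (Real.pi * κ * lam') with hsdef
    have hS1 : -1 ≤ s := Real.neg_one_le_sin _
    have hS2 : s ≤ 1 := Real.sin_le_one _
    rcases le_or_gt 2 (κ * lam) with hk2 | hk2
    · have hlam2d : lam ≤ 2*(lam - lam') := by
        have : 1/κ ≤ lam/2 := by rw [div_le_div_iff₀ hκ0 (by norm_num)]; nlinarith
        linarith
      nlinarith [sq_nonneg lam, mul_nonneg (sub_nonneg.2 hS2) (by linarith : (0:ℝ) ≤ 1 + s),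
        hlam0.le, hd.le, hlam2d]
    · have hsb : |s - Real.sin Real.pi| ≤ |Real.pi * κ * lam' - Real.pi| := sinLip _ _
      have habs : |Real.pi * κ * lam' - Real.pi| = Real.pi * (1 - κ*lam') := by
        rw [abs_of_nonpos (by nlinarith [Real.pi_pos])]; ring
      rw [Real.sin_pi, habs, sub_zero] at hsb
      obtain ⟨hs1', hs2'⟩ := abs_le.mp hsb
      have hm3 : lam*(Real.pi * (1 - κ*lam')) ≤ 8*(1/κ - lam') := by
        have h8 : Real.pi * (κ*lam) * (1/κ - lam') ≤ 8*(1/κ - lam') := by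
          have h9 : Real.pi * (κ*lam) ≤ 8 := by
            nlinarith [Real.pi_le_four, Real.pi_pos, hk2, hkl]
          nlinarith [mul_nonneg (by linarith : (0:ℝ) ≤ 8 - Real.pi*(κ*lam)) hb]
        have : lam*(Real.pi * (1 - κ*lam')) = Real.pi * (κ*lam) * (1/κ - lam') := by
          field_simp
        rw [this]; exact h8
      have hsd : 1/κ - lam' ≤ lam - lam' := by linarith
      have hE1 : lam * (1/2*s - 0) ≤ 5*(lam - lam') := by
        nlinarith [mul_le_mul_of_nonneg_left hs2' hlam0.le, hm3, hb, hd.le]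
      have hE2 : -(5*(lam - lam')) ≤ lam * (1/2*s - 0) := by
        nlinarith [mul_le_mul_of_nonneg_left hs1' hlam0.le, hm3, hb, hd.le]
      nlinarith [hE1, hE2, hd.le]
  · push_neg at hc1 hc2
    have hhalf : 1/(2*κ) ≤ lam/2 := by
      rw [div_le_div_iff₀ (by positivity) (by norm_num)]; nlinarith
    have hd2 : lam/2 ≤ lam - lam' := by
      have : lam' < 1/(2*κ) := hc2
      linarith
    have hre : lam * (1/2 - 0) = lam/2 := by ring
    rw [hre]
    nlinarith [hd2, hlam0.le]

theorem stmt_16 :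
    ∃ c > (0 : ℝ), ∀ (κ : ℝ), 1 ≤ κ → ∀ lam ∈ Set.Icc (1 / κ) 1, ∀ lam' ∈ Set.Icc (0 : ℝ) 1,
      (ff κ lam' - ff κ lam) ^ 2 + (gg κ lam' - gg κ lam) ^ 2 ≤
        c * κ ^ 2 * (lam' - lam) ^ 2 * (ff κ lam ^ 2 + gg κ lam ^ 2) := by
  refine ⟨200, by norm_num, ?_⟩
  rintro κ hκ lam ⟨h1, h2⟩ lam' ⟨h3, h4⟩
  have hκ0 : (0:ℝ) < κ := lt_of_lt_of_le one_pos hκ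
  have hlam0 : 0 < lam := lt_of_lt_of_le (by positivity) h1
  have hA := keyf κ lam lam' hκ h1 h2 h3
  have hB := keyg κ lam lam' hκ h1 h2 h3
  have hf : ff κ lam = 1/(2*κ*lam) := by rw [ff, if_pos h1]
  have hg : gg κ lam = 0 := by rw [gg, if_pos h1]
  have hRHS : 200 * κ^2 * (lam'-lam)^2 * ((1/(2*κ*lam))^2 + 0^2)
      = 50 * (lam'-lam)^2 / lam^2 := by
    field_simp; ring
  rw [hf] at hA
  rw [hg] at hB
  rw [hf, hg, hRHS, le_div_iff₀ (by positivity : (0:ℝ) < lam^2)]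
  nlinarith [hA, hB]
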